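/- Let H ⊆ K be a closed conjugation-invariant subspace such that κ restricted to H×H is nondegenerate and [P₁, E] is Hilbert–Schmidt, where E is the orthogonal projection onto H. Let A := ECE (self-adjoint, invertible on H) and A = A₊ - A₋ its positive/negative-part decomposition with A₊A₋ = 0. Then A⁻¹C is the κ-orthogonal projection onto H, p₊ := A₊⁻¹C is a basis projection of (H, κ|_{H×H}), P₂p₊ is Hilbert–Schmidt, and p₊ = P₁E if and only if [P₁, E] = 0. -/

import Mathlib

open ContinuousLinearMap

/-- `T` is a Hilbert–Schmidt operator. -/
def IsHS {K : Type*} [NormedAddCommGroup K] [InnerProductSpace ℂ K]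
    (T : K →L[ℂ] K) : Prop :=
  ∃ (ι : Type) (b : HilbertBasis ι ℂ K), Summable fun i => ‖T (b i)‖ ^ 2

/-- The conjugate operator `Ā = J A J` of `A` with respect to the conjugation `J`. -/
noncomputable def conjOp {K : Type*} [NormedAddCommGroup K] [InnerProductSpace ℂ K]
    (J : K ≃ₗᵢ⋆[ℂ] K) (A : K →L[ℂ] K) : K →L[ℂ] K :=
  LinearMap.mkContinuous
    { toFun := fun f => J (A (J f))
      map_add' := by intro x y; simp
      map_smul' := by intro c x; simp [map_smulₛₗ] }
    ‖A‖ fun f => by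
      calc ‖J (A (J f))‖ = ‖A (J f)‖ := J.norm_map _
        _ ≤ ‖A‖ * ‖J f‖ := A.le_opNorm _
        _ = ‖A‖ * ‖f‖ := by rw [J.norm_map]

set_option maxHeartbeats 1000000
set_option synthInstance.maxHeartbeats 1000000
set_option linter.unusedSectionVars false




section AuxHS
variable {K : Type*} [NormedAddCommGroup K] [InnerProductSpace ℂ K] [CompleteSpace K]

def HSB {ι : Type} (b : HilbertBasis ι ℂ K) (T : K →L[ℂ] K) : Prop :=
  Summable fun i => ‖T (b i)‖ ^ 2

lemma parseval_summable {ι : Type} (b : HilbertBasis ι ℂ K) (x : K) :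
    Summable (fun i => ‖(inner ℂ (b i) x : ℂ)‖ ^ 2) ∧
      (∑' i, ‖(inner ℂ (b i) x : ℂ)‖ ^ 2) = ‖x‖ ^ 2 := by
  have h0 : ∀ i, (inner ℂ x (b i) : ℂ) * (inner ℂ (b i) x : ℂ)
      = ((‖(inner ℂ (b i) x : ℂ)‖ ^ 2 : ℝ) : ℂ) := by
    intro i
    conv_lhs => rw [← inner_conj_symm x (b i)]
    exact_mod_cast RCLike.conj_mul ((inner ℂ (b i) x : ℂ))
  have hs := b.summable_inner_mul_inner x x
  simp_rw [h0] at hs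
  have hsr : Summable (fun i => ‖(inner ℂ (b i) x : ℂ)‖ ^ 2) :=
    Complex.summable_ofReal.mp hs
  refine ⟨hsr, ?_⟩
  have ht := b.tsum_inner_mul_inner x x
  simp_rw [h0] at ht
  have h2 : (inner ℂ x x : ℂ) = ((‖x‖ ^ 2 : ℝ) : ℂ) := by
    rw [inner_self_eq_norm_sq_to_K (𝕜 := ℂ)]; norm_cast
  rw [← Complex.ofReal_tsum, h2] at ht
  exact Complex.ofReal_injective ht

lemma HSB.star_op {ι : Type} {b : HilbertBasis ι ℂ K} {T : K →L[ℂ] K}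
    (h : HSB b T) : HSB b (star T) := by
  have hnn : (0 : ι × ι → ℝ) ≤ (fun p : ι × ι => ‖(inner ℂ (b p.2) (T (b p.1)) : ℂ)‖ ^ 2) := by
    intro p
    exact pow_nonneg (norm_nonneg _) 2
  have hnn2 : (0 : ι × ι → ℝ) ≤ (fun p : ι × ι => ‖(inner ℂ (b p.1) (T (b p.2)) : ℂ)‖ ^ 2) := by
    intro p
    exact pow_nonneg (norm_nonneg _) 2
  have hsum : Summable (fun p : ι × ι => ‖(inner ℂ (b p.2) (T (b p.1)) : ℂ)‖ ^ 2) := by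
    refine (summable_prod_of_nonneg hnn).mpr ⟨fun j => (parseval_summable b (T (b j))).1, ?_⟩
    have he : ∀ j, (∑' i, ‖(inner ℂ (b i) (T (b j)) : ℂ)‖ ^ 2) = ‖T (b j)‖ ^ 2 :=
      fun j => (parseval_summable b (T (b j))).2
    simp_rw [he]
    exact h
  have hswap : Summable (fun p : ι × ι => ‖(inner ℂ (b p.1) (T (b p.2)) : ℂ)‖ ^ 2) :=
    hsum.prod_symm
  have h2 := ((summable_prod_of_nonneg hnn2).mp hswap).2
  have key : ∀ i, ‖(star T) (b i)‖ ^ 2 = ∑' j, ‖(inner ℂ (b i) (T (b j)) : ℂ)‖ ^ 2 := by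
    intro i
    rw [← (parseval_summable b ((star T) (b i))).2]
    refine tsum_congr fun j => ?_
    congr 1
    rw [star_eq_adjoint, adjoint_inner_right]
    exact norm_inner_symm _ _
  simp only [HSB]
  simp_rw [key]
  exact h2

lemma HSB.comp_left {ι : Type} {b : HilbertBasis ι ℂ K} {T : K →L[ℂ] K}
    (h : HSB b T) (S : K →L[ℂ] K) : HSB b (S * T) := by
  refine Summable.of_nonneg_of_le (fun i => by positivity)
    (fun i => ?_) (h.mul_left (‖S‖ ^ 2))
  have h1 : ‖(S * T) (b i)‖ ≤ ‖S‖ * ‖T (b i)‖ := by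
    rw [ContinuousLinearMap.mul_apply]; exact S.le_opNorm _
  calc ‖(S * T) (b i)‖ ^ 2 ≤ (‖S‖ * ‖T (b i)‖) ^ 2 :=
        pow_le_pow_left₀ (norm_nonneg _) h1 2
    _ = ‖S‖ ^ 2 * ‖T (b i)‖ ^ 2 := by ring

lemma HSB.comp_right {ι : Type} {b : HilbertBasis ι ℂ K} {T : K →L[ℂ] K}
    (h : HSB b T) (S : K →L[ℂ] K) : HSB b (T * S) := by
  have h1 := (h.star_op.comp_left (star S)).star_op
  simpa [star_mul, star_star] using h1

lemma HSB.add_op {ι : Type} {b : HilbertBasis ι ℂ K} {T T' : K →L[ℂ] K}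
    (h : HSB b T) (h' : HSB b T') : HSB b (T + T') := by
  refine Summable.of_nonneg_of_le (fun i => by positivity) (fun i => ?_)
    (((h.add h').mul_left 2))
  have h1 : ‖(T + T') (b i)‖ ≤ ‖T (b i)‖ + ‖T' (b i)‖ := by
    rw [add_apply]; exact norm_add_le _ _
  calc ‖(T + T') (b i)‖ ^ 2 ≤ (‖T (b i)‖ + ‖T' (b i)‖) ^ 2 :=
        pow_le_pow_left₀ (norm_nonneg _) h1 2
    _ ≤ 2 * (‖T (b i)‖ ^ 2 + ‖T' (b i)‖ ^ 2) := by
        nlinarith [sq_nonneg (‖T (b i)‖ - ‖T' (b i)‖)]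

lemma HSB.smul_op {ι : Type} {b : HilbertBasis ι ℂ K} {T : K →L[ℂ] K}
    (h : HSB b T) (c : ℂ) : HSB b (c • T) := by
  refine Summable.of_nonneg_of_le (fun i => by positivity) (fun i => ?_) (h.mul_left (‖c‖ ^ 2))
  rw [smul_apply, norm_smul, mul_pow]

end AuxHS

section AuxJ
variable {K : Type*} [NormedAddCommGroup K] [InnerProductSpace ℂ K]

lemma conjOp_apply (J : K ≃ₗᵢ⋆[ℂ] K) (A : K →L[ℂ] K) (x : K) :
    conjOp J A x = J (A (J x)) := rfl

lemma J_inner (J : K ≃ₗᵢ⋆[ℂ] K) (x y : K) :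
    (inner ℂ (J x) (J y) : ℂ) = inner ℂ y x := by
  rw [inner_eq_sum_norm_sq_div_four, inner_eq_sum_norm_sq_div_four]
  have hI : ((RCLike.I : ℂ)) = Complex.I := rfl
  have e1 : ‖J x + J y‖ = ‖y + x‖ := by
    rw [← map_add, J.norm_map, add_comm]
  have e2 : ‖J x - J y‖ = ‖y - x‖ := by
    rw [← map_sub, J.norm_map, norm_sub_rev]
  have e3 : ‖J x - (RCLike.I : ℂ) • J y‖ = ‖y - (RCLike.I : ℂ) • x‖ := by
    have h1 : J x - (RCLike.I : ℂ) • J y = J (x + (RCLike.I : ℂ) • y) := by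
      rw [map_add, LinearIsometryEquiv.map_smulₛₗ, hI]
      simp [Complex.conj_I, sub_eq_add_neg, neg_smul]
    have h2 : y - (RCLike.I : ℂ) • x = (-(RCLike.I : ℂ)) • (x + (RCLike.I : ℂ) • y) := by
      rw [hI]
      simp [smul_add, smul_smul, Complex.I_mul_I]
      module
    rw [h1, J.norm_map, h2, norm_smul, hI]
    simp
  have e4 : ‖J x + (RCLike.I : ℂ) • J y‖ = ‖y + (RCLike.I : ℂ) • x‖ := by
    have h1 : J x + (RCLike.I : ℂ) • J y = J (x - (RCLike.I : ℂ) • y) := by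
      rw [map_sub, LinearIsometryEquiv.map_smulₛₗ, hI]
      simp [Complex.conj_I, sub_eq_add_neg, neg_smul]
    have h2 : y + (RCLike.I : ℂ) • x = ((RCLike.I : ℂ)) • (x - (RCLike.I : ℂ) • y) := by
      rw [hI]
      simp [smul_sub, smul_smul, Complex.I_mul_I]
      module
    rw [h1, J.norm_map, h2, norm_smul, hI]
    simp
  rw [e1, e2, e3, e4]

lemma J_rule (J : K ≃ₗᵢ⋆[ℂ] K) (hJ : ∀ f, J (J f) = f) (x y : K) :
    (inner ℂ (J x) y : ℂ) = inner ℂ (J y) x := by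
  conv_lhs => rw [← hJ y]
  rw [J_inner]

lemma conjOp_mul (J : K ≃ₗᵢ⋆[ℂ] K) (hJ : ∀ f, J (J f) = f) (A B : K →L[ℂ] K) :
    conjOp J (A * B) = conjOp J A * conjOp J B := by
  ext x
  simp [conjOp_apply, ContinuousLinearMap.mul_apply, hJ]

lemma conjOp_add (J : K ≃ₗᵢ⋆[ℂ] K) (A B : K →L[ℂ] K) :
    conjOp J (A + B) = conjOp J A + conjOp J B := by
  ext x
  simp [conjOp_apply]

lemma conjOp_sub (J : K ≃ₗᵢ⋆[ℂ] K) (A B : K →L[ℂ] K) :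
    conjOp J (A - B) = conjOp J A - conjOp J B := by
  ext x
  simp [conjOp_apply]

lemma conjOp_one (J : K ≃ₗᵢ⋆[ℂ] K) (hJ : ∀ f, J (J f) = f) :
    conjOp J 1 = 1 := by
  ext x
  simp [conjOp_apply, hJ]

lemma conjOp_zero (J : K ≃ₗᵢ⋆[ℂ] K) : conjOp J 0 = 0 := by
  ext x
  simp [conjOp_apply]

end AuxJ

section AuxJc
variable {K : Type*} [NormedAddCommGroup K] [InnerProductSpace ℂ K] [CompleteSpace K]

lemma conjOp_star (J : K ≃ₗᵢ⋆[ℂ] K) (hJ : ∀ f, J (J f) = f) (A : K →L[ℂ] K) :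
    star (conjOp J A) = conjOp J (star A) := by
  rw [star_eq_adjoint, star_eq_adjoint, eq_comm, ContinuousLinearMap.eq_adjoint_iff]
  intro x y
  rw [conjOp_apply, conjOp_apply, J_rule J hJ, adjoint_inner_right]
  have h9 : (inner ℂ x (J (A (J y))) : ℂ) = inner ℂ (A (J y)) (J x) := by
    conv_lhs => rw [← hJ x]
    rw [J_inner]
  rw [h9]

lemma conjOp_isPositive (J : K ≃ₗᵢ⋆[ℂ] K) (hJ : ∀ f, J (J f) = f) {A : K →L[ℂ] K}
    (hA : A.IsPositive) : (conjOp J A).IsPositive := by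
  constructor
  · refine ContinuousLinearMap.isSelfAdjoint_iff_isSymmetric.mp ?_
    rw [IsSelfAdjoint, conjOp_star J hJ, hA.isSelfAdjoint.star_eq]
  · intro x
    have h1 : (conjOp J A).reApplyInnerSelf x = RCLike.re (inner ℂ (J (A (J x))) x : ℂ) := rfl
    rw [h1, J_rule J hJ]
    have h2 : (inner ℂ (J x) (A (J x)) : ℂ) = starRingEnd ℂ (inner ℂ (A (J x)) (J x) : ℂ) :=
      (inner_conj_symm _ _).symm
    rw [h2]
    rw [RCLike.conj_re]
    exact hA.2 (J x)

lemma mp_unique {R : Type*} [Monoid R] [StarMul R] {A B C : R}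
    (h1 : A * B * A = A) (h2 : B * A * B = B) (h3 : star (A * B) = A * B)
    (h4 : star (B * A) = B * A)
    (h5 : A * C * A = A) (h6 : C * A * C = C) (h7 : star (A * C) = A * C)
    (h8 : star (C * A) = C * A) : B = C := by
  have e1 : (B * A) * (C * A) = B * A := by
    calc (B * A) * (C * A) = B * (A * C * A) := by simp only [mul_assoc]
    _ = B * A := by rw [h5]
  have e2 : (C * A) * (B * A) = C * A := by
    calc (C * A) * (B * A) = C * (A * B * A) := by simp only [mul_assoc]
    _ = C * A := by rw [h1]
  have hBA : B * A = C * A := by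
    calc B * A = star (B * A) := h4.symm
    _ = star ((B * A) * (C * A)) := by rw [e1]
    _ = star (C * A) * star (B * A) := by rw [star_mul]
    _ = (C * A) * (B * A) := by rw [h8, h4]
    _ = C * A := e2
  have e3 : (A * C) * (A * B) = A * B := by
    calc (A * C) * (A * B) = (A * C * A) * B := by simp only [mul_assoc]
    _ = A * B := by rw [h5]
  have e4 : (A * B) * (A * C) = A * C := by
    calc (A * B) * (A * C) = (A * B * A) * C := by simp only [mul_assoc]
    _ = A * C := by rw [h1]
  have hAB : A * B = A * C := by
    calc A * B = star (A * B) := h3.symm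
    _ = star ((A * C) * (A * B)) := by rw [e3]
    _ = star (A * B) * star (A * C) := by rw [star_mul]
    _ = (A * B) * (A * C) := by rw [h3, h7]
    _ = A * C := e4
  calc B = B * A * B := h2.symm
  _ = C * A * B := by rw [hBA]
  _ = C * (A * B) := by rw [mul_assoc]
  _ = C * (A * C) := by rw [hAB]
  _ = C * A * C := by rw [← mul_assoc]
  _ = C := h6

end AuxJc


section Aux3
variable {K : Type*} [NormedAddCommGroup K] [InnerProductSpace ℂ K] [CompleteSpace K]

lemma pos_decomp_unique {A b c b' c' : K →L[ℂ] K}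
    (hd : A = b - c) (hd' : A = b' - c') (ho : b * c = 0) (ho' : b' * c' = 0)
    (hb : b.IsPositive) (hc : c.IsPositive) (hb' : b'.IsPositive) (hc' : c'.IsPositive) :
    b = b' ∧ c = c' := by
  have h1 := CFC.posPart_negPart_unique hd ho ((nonneg_iff_isPositive b).mpr hb)
    ((nonneg_iff_isPositive c).mpr hc)
  have h2 := CFC.posPart_negPart_unique hd' ho' ((nonneg_iff_isPositive b').mpr hb')
    ((nonneg_iff_isPositive c').mpr hc')
  exact ⟨h1.1.symm.trans h2.1, h1.2.symm.trans h2.2⟩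

lemma inv_one_add_pos {a : K →L[ℂ] K} (ha : a.IsPositive) :
    ∃ u : K →L[ℂ] K, u * (1 + a) = 1 ∧ (1 + a) * u = 1 := by
  have ha' : (0 : K →L[ℂ] K) ≤ a := (nonneg_iff_isPositive a).mpr ha
  have h : IsUnit (1 + a) := by
    have hm : (-1 : ℝ) ∉ spectrum ℝ a := fun hm => by
      have := spectrum_nonneg_of_nonneg ha' hm; linarith
    rw [spectrum.notMem_iff] at hm
    have h2 := hm.neg
    rw [neg_sub] at h2
    simpa [add_comm] using h2
  obtain ⟨u, hu⟩ := h
  exact ⟨↑u⁻¹, by rw [← hu]; exact u.inv_mul, by rw [← hu]; exact u.mul_inv⟩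

lemma pos_inner_zero {a : K →L[ℂ] K} (ha : a.IsPositive) {y : K}
    (h : (inner ℂ (a y) y : ℂ).re = 0) : a y = 0 := by
  have ha' : (0 : K →L[ℂ] K) ≤ a := (nonneg_iff_isPositive a).mpr ha
  have hS0 : 0 ≤ CFC.sqrt a := CFC.sqrt_nonneg (a := a)
  set S := CFC.sqrt a with hS
  have hSsa : IsSelfAdjoint S := .of_nonneg hS0
  have hsq : S ^ 2 = a := CFC.sq_sqrt a ha'
  have h1 : a y = S (S y) := by rw [← hsq]; simp [sq, ContinuousLinearMap.mul_apply]
  have h2 : (inner ℂ (a y) y : ℂ) = inner ℂ (S y) (S y) := by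
    rw [h1, ← ContinuousLinearMap.adjoint_inner_right (A := S)]
    rw [ContinuousLinearMap.isSelfAdjoint_iff'.mp hSsa]
  have h3 : ‖S y‖ ^ 2 = 0 := by
    have h4 := h2 ▸ h
    rw [inner_self_eq_norm_sq_to_K (𝕜 := ℂ)] at h4
    simpa [← Complex.ofReal_pow] using h4
  have h5 : S y = 0 := by simpa using pow_eq_zero_iff (n := 2) (by norm_num) |>.mp h3
  rw [h1, h5, map_zero]

lemma conj_fixes_proj (J : K ≃ₗᵢ⋆[ℂ] K) (hJ : ∀ f, J (J f) = f)
    (H : Submodule ℂ K) (hHJ : ∀ x ∈ H, J x ∈ H)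
    (E : K →L[ℂ] K) (hEsa : IsSelfAdjoint E) (hEidem : E ∘L E = E)
    (hEran : LinearMap.range (E : K →ₗ[ℂ] K) = H) (x : K) : J (E (J x)) = E x := by
  have hadj : adjoint E = E := by rw [← star_eq_adjoint]; exact hEsa
  have hfix : ∀ u ∈ H, E u = u := by
    intro u hu
    rw [← hEran] at hu
    obtain ⟨w, rfl⟩ := hu
    exact ContinuousLinearMap.ext_iff.mp hEidem w
  have hmemE : ∀ z : K, E z ∈ H := by
    intro z; rw [← hEran]; exact ⟨z, rfl⟩
  have hEE : ∀ z : K, E (E z) = E z := fun z => ContinuousLinearMap.ext_iff.mp hEidem z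
  have hmove : ∀ u w : K, (inner ℂ u (E w) : ℂ) = inner ℂ (E u) w := by
    intro u w
    conv_rhs => rw [← hadj]
    exact (adjoint_inner_left E w u).symm
  have hperp : ∀ z : K, ∀ h ∈ H, (inner ℂ (z - E z) h : ℂ) = 0 := by
    intro z h hh
    rw [← hfix h hh, hmove, map_sub, hEE]
    simp
  set z := J (E (J x)) with hz
  have hzH : z ∈ H := hHJ _ (hmemE (J x))
  have hzperp : ∀ h ∈ H, (inner ℂ (x - z) h : ℂ) = 0 := by
    intro h hh
    rw [inner_sub_left]
    have h1 : (inner ℂ z h : ℂ) = inner ℂ (J h) (E (J x)) := J_rule J hJ _ h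
    rw [h1, hmove, hfix (J h) (hHJ h hh), J_inner]
    simp
  have hd : z - E x ∈ H := H.sub_mem hzH (hmemE x)
  have h0 : (inner ℂ (z - E x) (z - E x) : ℂ) = 0 := by
    have h1 : z - E x = (x - E x) - (x - z) := by abel
    calc (inner ℂ (z - E x) (z - E x) : ℂ)
        = inner ℂ ((x - E x) - (x - z)) (z - E x) := by rw [← h1]
      _ = (inner ℂ (x - E x) (z - E x) : ℂ) - inner ℂ (x - z) (z - E x) := inner_sub_left _ _ _
      _ = 0 := by rw [hperp x _ hd, hzperp _ hd, sub_zero]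
  have h6 := inner_self_eq_zero.mp h0
  exact sub_eq_zero.mp h6

end Aux3

section NegAux
variable {K : Type*} [NormedAddCommGroup K] [InnerProductSpace ℂ K] [CompleteSpace K]
lemma HSB.neg_op {ι : Type} {b : HilbertBasis ι ℂ K} {T : K →L[ℂ] K}
    (h : HSB b T) : HSB b (-T) := by
  simp only [HSB, ContinuousLinearMap.neg_apply, norm_neg]
  exact h
end NegAux

/-- For a closed conjugation-invariant subspace `H` on which `κ` is nondegenerate, with
`[P₁, E]` Hilbert–Schmidt (`E` the orthogonal projection onto `H`), `A = ECE = A₊ - A₋`: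
`A⁻¹C` is the κ-orthogonal projection onto `H`, `p₊ = A₊⁻¹C` is a basis projection of
`(H, κ|_H)`, `P₂p₊` is Hilbert–Schmidt, and `p₊ = P₁E` iff `[P₁, E] = 0`. -/
theorem stmt17 {K : Type*} [NormedAddCommGroup K] [InnerProductSpace ℂ K] [CompleteSpace K]
    (J : K ≃ₗᵢ⋆[ℂ] K) (hJ : ∀ f, J (J f) = f)
    (P₁ : K →L[ℂ] K) (hP₁sa : IsSelfAdjoint P₁) (hP₁idem : P₁ ∘L P₁ = P₁)
    (hP₁conj : conjOp J P₁ = 1 - P₁)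
    (C : K →L[ℂ] K) (hC : C = P₁ - (1 - P₁))
    (H : Submodule ℂ K) (hHc : IsClosed (H : Set K)) (hHJ : ∀ x ∈ H, J x ∈ H)
    (E : K →L[ℂ] K) (hEsa : IsSelfAdjoint E) (hEidem : E ∘L E = E)
    (hEran : LinearMap.range (E : K →ₗ[ℂ] K) = H)
    (hnd : ∀ x ∈ H, (∀ y ∈ H, (inner ℂ x (C y) : ℂ) = 0) → x = 0)
    (hHS : IsHS (P₁ ∘L E - E ∘L P₁))
    (Ap Am : K →L[ℂ] K) (hAppos : Ap.IsPositive) (hAmpos : Am.IsPositive)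
    (hA : E ∘L C ∘L E = Ap - Am) (hAo : Ap ∘L Am = 0)
    (hApsupp : Ap = E ∘L Ap ∘L E) (hAmsupp : Am = E ∘L Am ∘L E)
    (Ainv : K →L[ℂ] K)
    (hAinv1 : Ainv ∘L (E ∘L C ∘L E) = E) (hAinv2 : (E ∘L C ∘L E) ∘L Ainv = E)
    (hAinvsupp : Ainv = E ∘L Ainv ∘L E)
    -- `Apinv` is the generalized (Moore–Penrose) inverse of `A₊`, supported in `H`:
    (Apinv : K →L[ℂ] K)
    (hp1 : Ap ∘L Apinv ∘L Ap = Ap) (hp2 : Apinv ∘L Ap ∘L Apinv = Apinv)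
    (hp3 : IsSelfAdjoint (Ap ∘L Apinv)) (hp4 : IsSelfAdjoint (Apinv ∘L Ap))
    (hp5 : Apinv = E ∘L Apinv ∘L E) :
    ((Ainv ∘L C) ∘L (Ainv ∘L C) = Ainv ∘L C ∧
      C ∘L adjoint (Ainv ∘L C) ∘L C = Ainv ∘L C ∧
      LinearMap.range ((Ainv ∘L C : K →L[ℂ] K) : K →ₗ[ℂ] K) = H) ∧
    ((Apinv ∘L C) ∘L (Apinv ∘L C) = Apinv ∘L C ∧
      C ∘L adjoint (Apinv ∘L C) ∘L C = Apinv ∘L C ∧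
      LinearMap.range ((Apinv ∘L C : K →L[ℂ] K) : K →ₗ[ℂ] K) ≤ H ∧
      (∀ x ∈ H, (Apinv ∘L C) x + conjOp J (Apinv ∘L C) x = x) ∧
      (∀ x : K, (Apinv ∘L C) x ≠ 0 →
        0 < (inner ℂ ((Apinv ∘L C) x) (C ((Apinv ∘L C) x)) : ℂ).re)) ∧
    IsHS ((1 - P₁) ∘L (Apinv ∘L C)) ∧
    (Apinv ∘L C = P₁ ∘L E ↔ P₁ ∘L E = E ∘L P₁) := by
  -- ### basic star and idempotent facts
  have sE : star E = E := hEsa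
  have sP1 : star P₁ = P₁ := hP₁sa
  have sAp : star Ap = Ap := hAppos.isSelfAdjoint
  have sAm : star Am = Am := hAmpos.isSelfAdjoint
  have sC : star C = C := by rw [hC]; simp only [star_sub, star_one, sP1]
  have hP1idem' : P₁ * P₁ = P₁ := hP₁idem
  have hEE : E * E = E := hEidem
  have hCsum : C = P₁ + P₁ - 1 := by rw [hC]; abel
  have hCC : C * C = 1 := by
    rw [hCsum]
    have h2 : (P₁ + P₁ - 1) * (P₁ + P₁ - 1)
        = P₁*P₁ + P₁*P₁ + P₁*P₁ + P₁*P₁ - P₁ - P₁ - P₁ - P₁ + 1 := by noncomm_ring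
    rw [h2, hP1idem']
    abel
  -- support facts
  have hsupp : ∀ X : K →L[ℂ] K, X = E * X * E → X * E = X ∧ E * X = X := by
    intro X hX
    constructor
    · conv_lhs => rw [hX]
      rw [mul_assoc (E*X) E E, hEE]
      exact hX.symm
    · conv_lhs => rw [hX]
      simp only [← mul_assoc]
      rw [hEE]
      exact hX.symm
  obtain ⟨hApE, hEAp⟩ := hsupp Ap hApsupp
  obtain ⟨hAmE, hEAm⟩ := hsupp Am hAmsupp
  obtain ⟨hAiE, hEAi⟩ := hsupp Ainv hAinvsupp
  obtain ⟨hApiE, hEApi⟩ := hsupp Apinv hp5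
  have hApsupp' : Ap = E * Ap * E := hApsupp
  have hAmsupp' : Am = E * Am * E := hAmsupp
  have hAinvsupp' : Ainv = E * Ainv * E := hAinvsupp
  have hp5' : Apinv = E * Apinv * E := hp5
  have hA' : E * C * E = Ap - Am := hA
  have hAinv1' : Ainv * (E * C * E) = E := hAinv1
  have hAinv2' : (E * C * E) * Ainv = E := hAinv2
  have hAo' : Ap * Am = 0 := hAo
  have hp1' : Ap * Apinv * Ap = Ap := hp1
  have hp2' : Apinv * Ap * Apinv = Apinv := hp2
  have sApApinv : star (Ap * Apinv) = Ap * Apinv := hp3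
  have sApinvAp : star (Apinv * Ap) = Apinv * Ap := hp4
  have sA : star (E * C * E) = E * C * E := by
    rw [star_mul, star_mul, sE, sC]
    simp only [← mul_assoc]
  have hAmAp : Am * Ap = 0 := by
    have h1 : star (Ap * Am) = Am * Ap := by rw [star_mul, sAp, sAm]
    rw [← h1, hAo', star_zero]
  have e_ApApinv : Ap * Apinv = star Apinv * Ap := by
    conv_lhs => rw [← sApApinv]
    rw [star_mul, sAp]
  have e_ApinvAp : Apinv * Ap = Ap * star Apinv := by
    conv_lhs => rw [← sApinvAp]
    rw [star_mul, sAp]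
  have hApinvAm : Apinv * Am = 0 := by
    conv_lhs => rw [← hp2']
    rw [mul_assoc Apinv Ap Apinv, e_ApApinv]
    have h1 : Apinv * (star Apinv * Ap) * Am = Apinv * star Apinv * (Ap * Am) := by
      simp only [mul_assoc]
    rw [h1, hAo', mul_zero]
  have hAmApinv : Am * Apinv = 0 := by
    conv_lhs => rw [← hp2']
    rw [e_ApinvAp]
    have h1 : Am * (Ap * star Apinv * Apinv) = Am * Ap * (star Apinv * Apinv) := by
      simp only [mul_assoc]
    rw [h1, hAmAp, zero_mul]
  -- self-adjointness of Ainv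
  have sAinv : star Ainv = Ainv := by
    have h1 : star Ainv * (E*C*E) = E := by
      have h := congrArg star hAinv2'
      rw [star_mul, sA, sE] at h
      exact h
    have hsAisupp : star Ainv = E * star Ainv * E := by
      conv_lhs => rw [hAinvsupp']
      rw [star_mul, star_mul, sE]
      simp only [mul_assoc]
    obtain ⟨hsAiE, hEsAi⟩ := hsupp _ hsAisupp
    calc star Ainv = star Ainv * E := hsAiE.symm
      _ = star Ainv * ((E*C*E) * Ainv) := by rw [hAinv2']
      _ = (star Ainv * (E*C*E)) * Ainv := by rw [← mul_assoc]
      _ = E * Ainv := by rw [h1]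
      _ = Ainv := hEAi
  -- self-adjointness of Apinv via uniqueness of MP inverse
  have sApinv : star Apinv = Apinv := by
    have h5 : Ap * star Apinv * Ap = Ap := by
      have h := congrArg star hp1'
      rw [star_mul, star_mul, sAp] at h
      rw [← mul_assoc] at h
      exact h
    have h6 : star Apinv * Ap * star Apinv = star Apinv := by
      have h := congrArg star hp2'
      rw [star_mul, star_mul, sAp] at h
      rw [← mul_assoc] at h
      exact h
    have h7 : star (Ap * star Apinv) = Ap * star Apinv := by
      rw [star_mul, star_star, sAp]
      exact e_ApinvAp
    have h8 : star (star Apinv * Ap) = star Apinv * Ap := by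
      rw [star_mul, star_star, sAp]
      exact e_ApApinv
    exact (mp_unique hp1' hp2' sApApinv sApinvAp h5 h6 h7 h8).symm
  -- E fixes H pointwise
  have hfixE : ∀ u ∈ H, E u = u := by
    intro u hu
    rw [← hEran] at hu
    obtain ⟨w, rfl⟩ := hu
    exact ContinuousLinearMap.ext_iff.mp hEidem w
  -- ### Part 1
  have hAiCAi : Ainv * C * Ainv = Ainv := by
    calc Ainv * C * Ainv = (Ainv * E) * C * (E * Ainv) := by rw [hAiE, hEAi]
      _ = Ainv * (E * C * E) * Ainv := by simp only [mul_assoc]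
      _ = E * Ainv := by rw [mul_assoc Ainv (E*C*E) Ainv, ← mul_assoc Ainv (E*C*E) Ainv, hAinv1']
      _ = Ainv := hEAi
  have g1 : (Ainv * C) * (Ainv * C) = Ainv * C := by
    calc (Ainv * C) * (Ainv * C) = (Ainv * C * Ainv) * C := by simp only [mul_assoc]
      _ = Ainv * C := by rw [hAiCAi]
  have g2 : C * star (Ainv * C) * C = Ainv * C := by
    rw [star_mul, sC, sAinv]
    calc C * (C * Ainv) * C = (C * C) * (Ainv * C) := by simp only [mul_assoc]
      _ = Ainv * C := by rw [hCC, one_mul]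
  have hQE : Ainv * C * E = E := by
    calc Ainv * C * E = (E * Ainv * E) * C * E := by rw [← hAinvsupp']
      _ = E * (Ainv * (E * C * E)) := by simp only [mul_assoc]
      _ = E * E := by rw [hAinv1']
      _ = E := hEE
  have g3 : LinearMap.range ((Ainv ∘L C : K →L[ℂ] K) : K →ₗ[ℂ] K) = H := by
    apply le_antisymm
    · rintro x ⟨y, rfl⟩
      rw [← hEran]
      have h := ContinuousLinearMap.ext_iff.mp hAinvsupp (C y)
      exact ⟨Ainv (E (C y)), h.symm⟩
    · intro x hx
      rw [← hEran] at hx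
      obtain ⟨y, rfl⟩ := hx
      exact ⟨E y, ContinuousLinearMap.ext_iff.mp hQE y⟩
  -- ### Part 2 algebra
  have hApiCApi : Apinv * C * Apinv = Apinv := by
    calc Apinv * C * Apinv = (Apinv * E) * C * (E * Apinv) := by rw [hApiE, hEApi]
      _ = Apinv * ((E * C * E) * Apinv) := by simp only [mul_assoc]
      _ = Apinv * ((Ap - Am) * Apinv) := by rw [hA']
      _ = Apinv * (Ap * Apinv - Am * Apinv) := by rw [sub_mul]
      _ = Apinv * (Ap * Apinv) := by rw [hAmApinv, sub_zero]
      _ = Apinv := by rw [← mul_assoc, hp2']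
  have g4 : (Apinv * C) * (Apinv * C) = Apinv * C := by
    calc (Apinv * C) * (Apinv * C) = (Apinv * C * Apinv) * C := by simp only [mul_assoc]
      _ = Apinv * C := by rw [hApiCApi]
  have g5 : C * star (Apinv * C) * C = Apinv * C := by
    rw [star_mul, sC, sApinv]
    calc C * (C * Apinv) * C = (C * C) * (Apinv * C) := by simp only [mul_assoc]
      _ = Apinv * C := by rw [hCC, one_mul]
  have g6 : LinearMap.range ((Apinv ∘L C : K →L[ℂ] K) : K →ₗ[ℂ] K) ≤ H := by
    rintro x ⟨y, rfl⟩
    rw [← hEran]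
    have h := ContinuousLinearMap.ext_iff.mp hp5 (C y)
    exact ⟨Apinv (E (C y)), h.symm⟩
  have hEQp : E * (Apinv * C) = Apinv * C := by rw [← mul_assoc, hEApi]
  have hQpE : Apinv * C * E = Apinv * Ap := by
    calc Apinv * C * E = (E * Apinv * E) * C * E := by rw [← hp5']
      _ = E * (Apinv * (E * C * E)) := by simp only [mul_assoc]
      _ = E * (Apinv * (Ap - Am)) := by rw [hA']
      _ = E * (Apinv * Ap - Apinv * Am) := by rw [mul_sub]
      _ = E * (Apinv * Ap) := by rw [hApinvAm, sub_zero]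
      _ = (E * Apinv) * Ap := by rw [← mul_assoc]
      _ = Apinv * Ap := by rw [hEApi]
  -- ### conjugation facts
  have hEconj : conjOp J E = E := by
    ext x
    exact conj_fixes_proj J hJ H hHJ E hEsa hEidem hEran x
  have hCconj : conjOp J C = -C := by
    ext x
    have hp := fun z => ContinuousLinearMap.ext_iff.mp hP₁conj z
    have hpx : J (P₁ (J x)) = x - P₁ x := by
      have := hp x
      rw [conjOp_apply] at this
      rw [this]
      simp
    rw [conjOp_apply, hCsum]
    simp only [ContinuousLinearMap.sub_apply, ContinuousLinearMap.add_apply,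
      ContinuousLinearMap.one_apply, ContinuousLinearMap.neg_apply, map_sub, map_add]
    rw [hpx, hJ]
    abel
  have hconjA : conjOp J (E*C*E) = -(E*C*E) := by
    rw [conjOp_mul J hJ, conjOp_mul J hJ, hEconj, hCconj]
    simp only [mul_neg, neg_mul]
  have hApconj : conjOp J Ap = Am := by
    have hd2 : E*C*E = conjOp J Am - conjOp J Ap := by
      have h1 : conjOp J (E*C*E) = conjOp J Ap - conjOp J Am := by rw [hA', conjOp_sub]
      have h2 := hconjA.symm.trans h1
      calc E*C*E = -(-(E*C*E)) := (neg_neg _).symm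
        _ = -(conjOp J Ap - conjOp J Am) := by rw [h2]
        _ = conjOp J Am - conjOp J Ap := by rw [neg_sub]
    have ho2 : conjOp J Am * conjOp J Ap = 0 := by
      rw [← conjOp_mul J hJ, hAmAp, conjOp_zero]
    have hpos1 := conjOp_isPositive J hJ hAmpos
    have hpos2 := conjOp_isPositive J hJ hAppos
    have hu := pos_decomp_unique hA' hd2 hAo' ho2 hAppos hAmpos hpos1 hpos2
    exact hu.2.symm
  have hAmconj : conjOp J Am = Ap := by
    have hd2 : E*C*E = conjOp J Am - conjOp J Ap := by
      have h1 : conjOp J (E*C*E) = conjOp J Ap - conjOp J Am := by rw [hA', conjOp_sub]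
      have h2 := hconjA.symm.trans h1
      calc E*C*E = -(-(E*C*E)) := (neg_neg _).symm
        _ = -(conjOp J Ap - conjOp J Am) := by rw [h2]
        _ = conjOp J Am - conjOp J Ap := by rw [neg_sub]
    have ho2 : conjOp J Am * conjOp J Ap = 0 := by
      rw [← conjOp_mul J hJ, hAmAp, conjOp_zero]
    have hpos1 := conjOp_isPositive J hJ hAmpos
    have hpos2 := conjOp_isPositive J hJ hAppos
    have hu := pos_decomp_unique hA' hd2 hAo' ho2 hAppos hAmpos hpos1 hpos2
    exact hu.1.symm
  -- Penrose conditions for M := conjOp J Apinv w.r.t. Am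
  have hm1 : Am * conjOp J Apinv * Am = Am := by
    have h := congrArg (conjOp J) hp1'
    rw [conjOp_mul J hJ, conjOp_mul J hJ, hApconj] at h
    exact h
  have hm2 : conjOp J Apinv * Am * conjOp J Apinv = conjOp J Apinv := by
    have h := congrArg (conjOp J) hp2'
    rw [conjOp_mul J hJ, conjOp_mul J hJ, hApconj] at h
    exact h
  have hm3 : star (Am * conjOp J Apinv) = Am * conjOp J Apinv := by
    have hAmM : Am * conjOp J Apinv = conjOp J (Ap * Apinv) := by
      rw [conjOp_mul J hJ, hApconj]
    rw [hAmM, conjOp_star J hJ, sApApinv]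
  have hm4 : star (conjOp J Apinv * Am) = conjOp J Apinv * Am := by
    have hMAm : conjOp J Apinv * Am = conjOp J (Apinv * Ap) := by
      rw [conjOp_mul J hJ, hApconj]
    rw [hMAm, conjOp_star J hJ, sApinvAp]
  have hApM : Ap * conjOp J Apinv = 0 := by
    conv_lhs => rw [← hm2]
    rw [← hm4]
    rw [star_mul, sAm]
    have h1 : Ap * (Am * star (conjOp J Apinv) * conjOp J Apinv)
        = Ap * Am * (star (conjOp J Apinv) * conjOp J Apinv) := by
      simp only [mul_assoc]
    rw [h1, hAo', zero_mul]
  have hEM : E * conjOp J Apinv = conjOp J Apinv := by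
    have h := congrArg (conjOp J) hEApi
    rw [conjOp_mul J hJ, hEconj] at h
    exact h
  have hZsum : Apinv * Ap + conjOp J Apinv * Am = E := by
    have hApZ : Ap * (E - Apinv*Ap - conjOp J Apinv*Am) = 0 := by
      rw [mul_sub, mul_sub]
      have t1 : Ap * (Apinv*Ap) = Ap := by rw [← mul_assoc]; exact hp1'
      have t2 : Ap * (conjOp J Apinv * Am) = 0 := by rw [← mul_assoc, hApM, zero_mul]
      rw [hApE, t1, t2, sub_self, zero_sub, neg_zero]
    have hAmZ : Am * (E - Apinv*Ap - conjOp J Apinv*Am) = 0 := by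
      rw [mul_sub, mul_sub]
      have t1 : Am * (Apinv*Ap) = 0 := by rw [← mul_assoc, hAmApinv, zero_mul]
      have t2 : Am * (conjOp J Apinv * Am) = Am := by rw [← mul_assoc]; exact hm1
      rw [hAmE, t1, t2, sub_zero, sub_self]
    have hEZ : E * (E - Apinv*Ap - conjOp J Apinv*Am) = E - Apinv*Ap - conjOp J Apinv*Am := by
      rw [mul_sub, mul_sub, hEE]
      rw [← mul_assoc E Apinv Ap, hEApi, ← mul_assoc E (conjOp J Apinv) Am, hEM]
    have hZ0 : E - Apinv*Ap - conjOp J Apinv*Am = 0 := by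
      have h1 : (E*C*E) * (E - Apinv*Ap - conjOp J Apinv*Am) = 0 := by
        rw [hA', sub_mul, hApZ, hAmZ, sub_zero]
      calc E - Apinv*Ap - conjOp J Apinv*Am
          = E * (E - Apinv*Ap - conjOp J Apinv*Am) := hEZ.symm
        _ = (Ainv * (E*C*E)) * (E - Apinv*Ap - conjOp J Apinv*Am) := by rw [hAinv1']
        _ = Ainv * ((E*C*E) * (E - Apinv*Ap - conjOp J Apinv*Am)) := by rw [mul_assoc]
        _ = Ainv * 0 := by rw [h1]
        _ = 0 := mul_zero _
    have h2 : E - (Apinv*Ap + conjOp J Apinv*Am) = 0 := by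
      calc E - (Apinv*Ap + conjOp J Apinv*Am) = E - Apinv*Ap - conjOp J Apinv*Am := by abel
        _ = 0 := hZ0
    have h3 := sub_eq_zero.mp h2
    exact h3.symm
  have g7 : ∀ x ∈ H, (Apinv ∘L C) x + conjOp J (Apinv ∘L C) x = x := by
    intro x hx
    have hEx : E x = x := hfixE x hx
    have h1 : (Apinv ∘L C) x = (Apinv*Ap) x := by
      calc (Apinv ∘L C) x = (Apinv*C) (E x) := by rw [hEx]; exact rfl
        _ = (Apinv*C*E) x := rfl
        _ = (Apinv*Ap) x := ContinuousLinearMap.ext_iff.mp hQpE x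
    have hJx : J x ∈ H := hHJ x hx
    have hEJx : E (J x) = J x := hfixE _ hJx
    have h2 : conjOp J (Apinv ∘L C) x = (conjOp J Apinv * Am) x := by
      calc conjOp J (Apinv ∘L C) x = J ((Apinv*C) (J x)) := rfl
        _ = J ((Apinv*C) (E (J x))) := by rw [hEJx]
        _ = J ((Apinv*C*E) (J x)) := rfl
        _ = J ((Apinv*Ap) (J x)) := by rw [hQpE]
        _ = conjOp J (Apinv*Ap) x := rfl
        _ = (conjOp J Apinv * conjOp J Ap) x := by rw [conjOp_mul J hJ]
        _ = (conjOp J Apinv * Am) x := by rw [hApconj]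
    rw [h1, h2, ← ContinuousLinearMap.add_apply, hZsum, hEx]
  -- ### positivity
  have g8 : ∀ x : K, (Apinv ∘L C) x ≠ 0 →
      0 < (inner ℂ ((Apinv ∘L C) x) (C ((Apinv ∘L C) x)) : ℂ).re := by
    intro x hx0
    set y := (Apinv ∘L C) x with hy
    have hEy : E y = y := by
      have h := ContinuousLinearMap.ext_iff.mp hEQp x
      exact h
    have hAmy : Am y = 0 := by
      have hAmQp : Am * (Apinv * C) = 0 := by rw [← mul_assoc, hAmApinv, zero_mul]
      have h := ContinuousLinearMap.ext_iff.mp hAmQp x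
      exact h
    have hmoveE : ∀ u w : K, (inner ℂ (E u) w : ℂ) = inner ℂ u (E w) := by
      intro u w
      have hadj : adjoint E = E := by rw [← star_eq_adjoint]; exact hEsa
      conv_lhs => rw [← hadj]
      exact adjoint_inner_left E w u
    have hinner : (inner ℂ y (C y) : ℂ) = inner ℂ y (Ap y) := by
      calc (inner ℂ y (C y) : ℂ) = inner ℂ (E y) (C (E y)) := by rw [hEy]
        _ = inner ℂ y (E (C (E y))) := hmoveE y (C (E y))
        _ = inner ℂ y ((E*C*E) y) := rfl
        _ = inner ℂ y ((Ap - Am) y) := by rw [hA']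
        _ = inner ℂ y (Ap y - Am y) := rfl
        _ = inner ℂ y (Ap y) := by rw [hAmy, sub_zero]
    rw [hinner]
    have hge : 0 ≤ (inner ℂ y (Ap y) : ℂ).re := by
      have h2 := hAppos.2 y
      have h3 : Ap.reApplyInnerSelf y = (inner ℂ (Ap y) y : ℂ).re := rfl
      rw [h3] at h2
      have h4 : (inner ℂ (Ap y) y : ℂ) = starRingEnd ℂ (inner ℂ y (Ap y) : ℂ) :=
        (inner_conj_symm _ _).symm
      rw [h4, Complex.conj_re] at h2
      exact h2
    rcases hge.lt_or_eq with hlt | heq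
    · exact hlt
    · exfalso
      have h5 : (inner ℂ (Ap y) y : ℂ).re = 0 := by
        have h4 : (inner ℂ (Ap y) y : ℂ) = starRingEnd ℂ (inner ℂ y (Ap y) : ℂ) :=
          (inner_conj_symm _ _).symm
        rw [h4, Complex.conj_re, ← heq]
      have h6 : Ap y = 0 := pos_inner_zero hAppos h5
      have hPQp : (Apinv*Ap)*(Apinv*C) = Apinv*C := by
        calc (Apinv*Ap)*(Apinv*C) = (Apinv*Ap*Apinv)*C := by simp only [mul_assoc]
          _ = Apinv*C := by rw [hp2']
      have h7 : y = Apinv (Ap y) := by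
        calc y = (Apinv*C) x := rfl
          _ = ((Apinv*Ap)*(Apinv*C)) x := by rw [hPQp]
          _ = Apinv (Ap ((Apinv*C) x)) := rfl
          _ = Apinv (Ap y) := rfl
      rw [h6, map_zero] at h7
      exact hx0 h7
  -- ### Hilbert–Schmidt part
  obtain ⟨ι, b, hb⟩ := hHS
  have hbT0 : HSB b (P₁ * E - E * P₁) := hb
  obtain ⟨U, hU1, hU2⟩ := inv_one_add_pos hAppos
  have hcommU : U * E = E * U := by
    have hcomm : (1+Ap)*E = E*(1+Ap) := by
      rw [add_mul, mul_add, one_mul, mul_one, hApE, hEAp]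
    calc U * E = U * E * 1 := (mul_one _).symm
      _ = U * E * ((1+Ap) * U) := by rw [hU2]
      _ = U * (E * (1+Ap)) * U := by simp only [mul_assoc]
      _ = U * ((1+Ap) * E) * U := by rw [← hcomm]
      _ = (U * (1+Ap)) * (E * U) := by simp only [mul_assoc]
      _ = 1 * (E * U) := by rw [hU1]
      _ = E * U := one_mul _
  have hBE : (E*U)*(E + Ap) = E := by
    have h1 : U*(E+Ap) = 1 - U + U*E := by
      have h2 : E + Ap = (1+Ap) - (1 - E) := by abel
      rw [h2, mul_sub, hU1, mul_sub, mul_one]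
      abel
    calc (E*U)*(E+Ap) = E*(U*(E+Ap)) := by rw [mul_assoc]
      _ = E*(1 - U + U*E) := by rw [h1]
      _ = E - E*U + E*(U*E) := by rw [mul_add, mul_sub, mul_one]
      _ = E - E*U + E*(E*U) := by rw [hcommU]
      _ = E - E*U + (E*E)*U := by rw [← mul_assoc]
      _ = E := by rw [hEE]; abel
  have hApQ : (Ap - Am) * (Apinv * C) = Ap * (Apinv * C) := by
    rw [sub_mul, ← mul_assoc Am Apinv C, hAmApinv, zero_mul, sub_zero]
  have hApSq : (E*C*E)*((E*C*E)*(Apinv*C)) = (Ap*Ap)*(Apinv*C) := by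
    rw [hA', hApQ, sub_mul]
    have h2 : Am*(Ap*(Apinv*C)) = 0 := by rw [← mul_assoc, hAmAp, zero_mul]
    rw [h2, sub_zero, ← mul_assoc]
  have hYQ : (E - (E*C*E)*(E*C*E))*(Apinv*C) = (E+Ap)*((E - E*C*E)*(Apinv*C)) := by
    have lhs1 : (E - (E*C*E)*(E*C*E))*(Apinv*C) = Apinv*C - (Ap*Ap)*(Apinv*C) := by
      rw [sub_mul, hEQp, mul_assoc, hApSq]
    have rhs1 : (E+Ap)*((E - E*C*E)*(Apinv*C)) = Apinv*C - (Ap*Ap)*(Apinv*C) := by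
      have h1 : (E - E*C*E)*(Apinv*C) = Apinv*C - Ap*(Apinv*C) := by
        rw [sub_mul, hEQp, hA', hApQ]
      rw [h1, mul_sub, add_mul, add_mul, hEQp]
      have h2 : E*(Ap*(Apinv*C)) = Ap*(Apinv*C) := by rw [← mul_assoc, hEAp]
      rw [h2, ← mul_assoc]
      abel
    rw [lhs1, rhs1]
  have hEY : E*((E - E*C*E)*(Apinv*C)) = (E - E*C*E)*(Apinv*C) := by
    rw [← mul_assoc]
    have h1 : E*(E - E*C*E) = E - E*C*E := by
      rw [mul_sub, hEE, ← mul_assoc, ← mul_assoc, hEE]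
    rw [h1]
  have key4 : (E - E*C*E)*(Apinv*C) = ((E*U)*(E - (E*C*E)*(E*C*E)))*(Apinv*C) := by
    rw [mul_assoc (E*U) _ _, hYQ, ← mul_assoc (E*U) (E+Ap) _, hBE, hEY]
  have hSplit : (1-P₁)*E = (E*P₁ - P₁*E) + E*(1-P₁) := by noncomm_ring
  have hHalf : E*(1-P₁)*E = (2:ℂ)⁻¹ • (E - E*C*E) := by
    have h2 : E - E*C*E = (2:ℂ)•(E*(1-P₁)*E) := by
      rw [hCsum]
      have h3 : E*(P₁+P₁-1)*E = E*P₁*E + E*P₁*E - E*E := by noncomm_ring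
      have h4 : E*(1-P₁)*E = E*E - E*P₁*E := by noncomm_ring
      rw [h3, h4, hEE, two_smul]
      abel
    rw [h2, smul_smul]
    norm_num
  have hterm2 : (E*(1-P₁))*(Apinv*C)
      = (2:ℂ)⁻¹ • (((E*U)*(E - (E*C*E)*(E*C*E)))*(Apinv*C)) := by
    conv_lhs => rw [← hEQp]
    rw [← mul_assoc, hHalf, smul_mul_assoc, key4]
  have hFinal : (1-P₁)*(Apinv*C) = (E*P₁ - P₁*E)*(Apinv*C)
      + (2:ℂ)⁻¹ • (((E*U)*(E - (E*C*E)*(E*C*E)))*(Apinv*C)) := by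
    conv_lhs => rw [← hEQp]
    rw [← mul_assoc, hSplit, add_mul, hterm2]
  have hComm2 : C*E - E*C = (2:ℂ)•(P₁*E - E*P₁) := by
    rw [hCsum]
    have h1 : (P₁+P₁-1)*E - E*(P₁+P₁-1) = (P₁*E - E*P₁) + (P₁*E - E*P₁) := by noncomm_ring
    rw [h1, two_smul]
  have hWform : E - (E*C*E)*(E*C*E)
      = (-(2:ℂ)) • ((E*(P₁*E - E*P₁)) * (C*E)) := by
    have ha : (E*C*E)*(E*C*E) = E*C*(E*(C*E)) := by
      calc (E*C*E)*(E*C*E) = E*C*((E*E)*(C*E)) := by simp only [mul_assoc]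
        _ = E*C*(E*(C*E)) := by rw [hEE]
    have hb2 : (E*C*(1-E))*(C*E) = E*(C*(C*E)) - E*C*(E*(C*E)) := by noncomm_ring
    have hc2 : E*(C*(C*E)) = E := by rw [← mul_assoc C C E, hCC, one_mul, hEE]
    have h1 : E - (E*C*E)*(E*C*E) = (E*C*(1-E))*(C*E) := by
      rw [ha, hb2, hc2]
    have h3 : E*C*(1-E) = -(E*(C*E - E*C)) := by
      have h4 : E*(C*E - E*C) = E*(C*E) - (E*E)*C := by noncomm_ring
      rw [h4, hEE]
      noncomm_ring
    rw [h1, h3, hComm2, mul_smul_comm, ← neg_smul, smul_mul_assoc]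
  have hHS2 : HSB b ((1-P₁)*(Apinv*C)) := by
    rw [hFinal]
    apply HSB.add_op
    · have h1 : E*P₁ - P₁*E = -(P₁*E - E*P₁) := by abel
      rw [h1]
      exact (hbT0.neg_op).comp_right (Apinv*C)
    · apply HSB.smul_op
      apply HSB.comp_right
      rw [hWform]
      apply HSB.comp_left
      apply HSB.smul_op
      exact (hbT0.comp_left E).comp_right (C*E)
  -- ### the iff
  have g10 : Apinv ∘L C = P₁ ∘L E ↔ P₁ ∘L E = E ∘L P₁ := by
    constructor
    · intro h
      have h' : Apinv * C = P₁ * E := h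
      have h1 : P₁*E = E*(P₁*E) := by
        rw [← h']
        conv_lhs => rw [← hEApi]
        rw [mul_assoc, h']
      have h2 : star (P₁*E) = P₁*E := by
        rw [h1, star_mul, star_mul, sE, sP1, mul_assoc]
      have h3 : E * P₁ = P₁ * E := by
        calc E * P₁ = star E * star P₁ := by rw [sE, sP1]
          _ = star (P₁ * E) := (star_mul _ _).symm
          _ = P₁ * E := h2
      exact h3.symm
    · intro h
      have hcom : P₁ * E = E * P₁ := h
      have hpidem : (P₁*E)*(P₁*E) = P₁*E := by
        calc (P₁*E)*(P₁*E) = P₁*((E*P₁)*E) := by simp only [mul_assoc]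
          _ = P₁*((P₁*E)*E) := by rw [← hcom]
          _ = (P₁*P₁)*(E*E) := by simp only [mul_assoc]
          _ = P₁*E := by rw [hP1idem', hEE]
      have hpsa : star (P₁*E) = P₁*E := by rw [star_mul, sE, sP1, ← hcom]
      have hpE : (P₁*E)*E = P₁*E := by rw [mul_assoc, hEE]
      have hEp : E*(P₁*E) = P₁*E := by
        rw [← mul_assoc, ← hcom, mul_assoc, hEE]
      have hposb : (P₁*E).IsPositive := by
        apply (nonneg_iff_isPositive _).mp
        have h0 := star_mul_self_nonneg (P₁*E)
        rwa [hpsa, hpidem] at h0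
      have hposc : (E - P₁*E).IsPositive := by
        apply (nonneg_iff_isPositive _).mp
        have hqsa : star (E - P₁*E) = E - P₁*E := by rw [star_sub, sE, hpsa]
        have hqidem : (E - P₁*E)*(E - P₁*E) = E - P₁*E := by
          rw [sub_mul, mul_sub, mul_sub, hEE, hEp, hpE, hpidem]
          abel
        have h0 := star_mul_self_nonneg (E - P₁*E)
        rwa [hqsa, hqidem] at h0
      have hdec : E*C*E = (P₁*E) - (E - P₁*E) := by
        have h1 : E*C*E = E*P₁*E + E*P₁*E - E*E := by
          rw [hCsum]; noncomm_ring
        have h2 : E*P₁*E = P₁*E := by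
          rw [← hcom, mul_assoc, hEE]
        rw [h1, h2, hEE]
        abel
      have hortho : (P₁*E)*(E - P₁*E) = 0 := by
        rw [mul_sub, hpE, hpidem, sub_self]
      have hApEq : Ap = P₁*E :=
        (pos_decomp_unique hA' hdec hAo' hortho hAppos hAmpos hposb hposc).1
      have hApinvEq : Apinv = P₁*E := by
        have q5 : Ap * (P₁*E) * Ap = Ap := by
          rw [hApEq, hpidem, hpidem]
        have q6 : (P₁*E) * Ap * (P₁*E) = P₁*E := by
          rw [hApEq, hpidem, hpidem]
        have q7 : star (Ap * (P₁*E)) = Ap * (P₁*E) := by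
          rw [hApEq, hpidem, hpsa]
        have q8 : star ((P₁*E) * Ap) = (P₁*E) * Ap := by
          rw [hApEq, hpidem, hpsa]
        exact mp_unique hp1' hp2' sApApinv sApinvAp q5 q6 q7 q8
      have hfin : Apinv * C = P₁ * E := by
        rw [hApinvEq, hCsum, mul_sub, mul_add, mul_one]
        have hEP₁P : (P₁*E)*P₁ = P₁*E := by
          calc (P₁*E)*P₁ = P₁*(E*P₁) := by rw [mul_assoc]
            _ = P₁*(P₁*E) := by rw [← hcom]
            _ = (P₁*P₁)*E := by rw [← mul_assoc]
            _ = P₁*E := by rw [hP1idem']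
        rw [hEP₁P]
        abel
      exact hfin
  exact ⟨⟨g1, by rw [← star_eq_adjoint]; exact g2, g3⟩,
    ⟨g4, by rw [← star_eq_adjoint]; exact g5, g6, g7, g8⟩,
    ⟨ι, b, hHS2⟩, g10⟩
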